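/- Let A ≥ 2 be an integer, and let D, T, W be finite sequences of integers from the alphabet {1,…,A}, with T and W nonempty, of equal length, and differing in their first elements. Then |[D,T] − [D,W]| ≥ 1/((2A)⁴·⟨D⟩²), where [D,X] denotes the continued fraction whose partial quotients are the concatenation of D and X, and ⟨D⟩ is the continuant of D. -/

import Mathlib

/-!
Writing `M_d = !![0, 1; 1, d]` for the matrix of `x ↦ 1/(d + x)`, the map `x ↦ [D, x]` is the
Möbius transformation of `M_D = ∏ M_d`, whose determinant is `±1` and whose bottom row `(c, ⟨D⟩)`
satisfies `0 ≤ c ≤ ⟨D⟩`. Hence `|[D,T] - [D,W]| = |[T] - [W]| / ((c[T] + ⟨D⟩)(c[W] + ⟨D⟩))`, and the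
denominator is at most `4⟨D⟩²`. Since `T` and `W` differ in their first quotient,
`|[T] - [W]| ≥ (1/(A+1)) / (A+1)²`, and `4(A+1)³ ≤ (2A)⁴` for `A ≥ 2`.
-/

/-- Continuant of a list of naturals: `cont [] = 1`, `cont [d] = d`,
`cont (d₁,…,d_k) = d₁·cont (d₂,…,d_k) + cont (d₃,…,d_k)`. -/
def cont : List ℕ → ℕ
  | [] => 1
  | [d] => d
  | d :: e :: rest => d * cont (e :: rest) + cont rest

/-- Value of the finite continued fraction `[d₁,…,d_k] = 1/(d₁+1/(d₂+⋯+1/d_k))`,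
with `cfv [] = 0`. -/
noncomputable def cfv : List ℕ → ℝ
  | [] => 0
  | d :: rest => 1 / (d + cfv rest)

noncomputable def cfMatrix (D : List ℕ) : Matrix (Fin 2) (Fin 2) ℝ :=
  (D.map fun d : ℕ => !![0, 1; 1, (d : ℝ)]).prod

lemma cfMatrix_cons (d : ℕ) (D : List ℕ) :
    cfMatrix (d :: D) = !![0, 1; 1, (d : ℝ)] * cfMatrix D := by
  simp only [cfMatrix, List.map_cons, List.prod_cons]

lemma cfMatrix_append_singleton (D : List ℕ) (d : ℕ) :
    cfMatrix (D ++ [d]) = cfMatrix D * !![0, 1; 1, (d : ℝ)] := by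
  simp [cfMatrix]

lemma det_cfMatrix (D : List ℕ) : (cfMatrix D).det = (-1) ^ D.length := by
  induction D with
  | nil => simp [cfMatrix]
  | cons d D ih =>
    rw [cfMatrix_cons, Matrix.det_mul, ih, Matrix.det_fin_two_of, List.length_cons, pow_succ']
    ring

lemma cfMatrix_one_one (D : List ℕ) : cfMatrix D 1 1 = cont D := by
  induction D using cont.induct with
  | case1 => simp [cfMatrix, cont]
  | case2 d => simp [cfMatrix, cont]
  | case3 d e rest ih₁ ih₂ =>
    have h01 : cfMatrix (e :: rest) 0 1 = cfMatrix rest 1 1 := by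
      simp [cfMatrix_cons, Matrix.mul_apply]
    simp only [cfMatrix_cons d, Matrix.mul_apply, Matrix.of_apply, Matrix.cons_val',
      Matrix.cons_val_fin_one, Matrix.cons_val_one, Fin.sum_univ_two, Matrix.cons_val_zero, h01,
      ih₁, ih₂, one_mul, cont, Nat.cast_add, Nat.cast_mul]
    ring

lemma cfMatrix_bottom_row {D : List ℕ} (hD : ∀ d ∈ D, 1 ≤ d) :
    0 ≤ cfMatrix D 1 0 ∧ cfMatrix D 1 0 ≤ cfMatrix D 1 1 ∧ 1 ≤ cfMatrix D 1 1 := by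
  induction D using List.reverseRecOn with
  | nil => simp [cfMatrix]
  | append_singleton D d ih =>
    have hd : (1 : ℝ) ≤ d := by exact_mod_cast hD d (by simp)
    obtain ⟨h0, hle, h1⟩ := ih fun x hx => hD x (by simp [hx])
    simp only [cfMatrix_append_singleton, Matrix.mul_apply, Fin.sum_univ_two, Matrix.of_apply,
      Matrix.cons_val', Matrix.cons_val_zero, Matrix.cons_val_one, Matrix.empty_val', Matrix.cons_val_fin_one, mul_zero, mul_one, zero_add]
    exact ⟨by linarith, by nlinarith, by nlinarith⟩

lemma cfv_nonneg (X : List ℕ) : 0 ≤ cfv X := by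
  cases X with
  | nil => simp [cfv]
  | cons d X => rw [cfv]; have := cfv_nonneg X; positivity

lemma cfv_le_one {X : List ℕ} (hX : ∀ d ∈ X, 1 ≤ d) : cfv X ≤ 1 := by
  cases X with
  | nil => simp [cfv]
  | cons d X =>
    have hd : (1 : ℝ) ≤ d := by exact_mod_cast hX d (by simp)
    rw [cfv, div_le_one (by linarith [cfv_nonneg X])]
    linarith [cfv_nonneg X]

lemma one_div_add_one_le_cfv {A : ℕ} {X : List ℕ} (hX : ∀ d ∈ X, 1 ≤ d ∧ d ≤ A) (hne : X ≠ []) :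
    1 / ((A : ℝ) + 1) ≤ cfv X := by
  obtain ⟨d, X, rfl⟩ := List.exists_cons_of_ne_nil hne
  have hdA : (d : ℝ) ≤ A := by exact_mod_cast (hX d (by simp)).2
  have hX1 : cfv X ≤ 1 := cfv_le_one fun x hx => (hX x (by simp [hx])).1
  have hd1 : (1 : ℝ) ≤ d := by exact_mod_cast (hX d (by simp)).1
  rw [cfv]
  gcongr
  linarith [cfv_nonneg X]

lemma cfv_append {D : List ℕ} (hD : ∀ d ∈ D, 1 ≤ d) (X : List ℕ) :
    cfv (D ++ X) = (cfMatrix D 0 0 * cfv X + cfMatrix D 0 1) /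
      (cfMatrix D 1 0 * cfv X + cfMatrix D 1 1) := by
  induction D with
  | nil => simp [cfMatrix]
  | cons d D ih =>
    obtain ⟨hc, -, he⟩ := cfMatrix_bottom_row fun x hx => hD x (List.mem_cons_of_mem d hx)
    have hden : cfMatrix D 1 0 * cfv X + cfMatrix D 1 1 ≠ 0 := by
      have := cfv_nonneg X; positivity
    rw [List.cons_append, cfv, ih fun x hx => hD x (List.mem_cons_of_mem d hx),
      add_div' _ _ _ hden, one_div_div, cfMatrix_cons]
    simp only [Matrix.mul_apply, Matrix.of_apply, Matrix.cons_val', Matrix.cons_val_fin_one,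
      Matrix.cons_val_zero, Matrix.cons_val_one, Fin.sum_univ_two, zero_mul, one_mul, zero_add]
    ring

lemma mobius_sub_mobius {K : Type*} [Field K] {a b c e x y : K} (hx : c * x + e ≠ 0)
    (hy : c * y + e ≠ 0) :
    (a * x + b) / (c * x + e) - (a * y + b) / (c * y + e) =
      (a * e - b * c) * (x - y) / ((c * x + e) * (c * y + e)) := by
  rw [div_sub_div _ _ hx hy]
  ring

lemma abs_sub_div_le_abs_cfv_append_sub {D X Y : List ℕ} (hD : ∀ d ∈ D, 1 ≤ d)
    (hX : ∀ d ∈ X, 1 ≤ d) (hY : ∀ d ∈ Y, 1 ≤ d) :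
    |cfv X - cfv Y| / (4 * (cont D : ℝ) ^ 2) ≤ |cfv (D ++ X) - cfv (D ++ Y)| := by
  obtain ⟨hc, hce, he⟩ := cfMatrix_bottom_row hD
  have hx := cfv_nonneg X
  have hy := cfv_nonneg Y
  have hdx : 0 < cfMatrix D 1 0 * cfv X + cfMatrix D 1 1 := by positivity
  have hdy : 0 < cfMatrix D 1 0 * cfv Y + cfMatrix D 1 1 := by positivity
  have hdet : |cfMatrix D 0 0 * cfMatrix D 1 1 - cfMatrix D 0 1 * cfMatrix D 1 0| = 1 := by
    rw [← Matrix.det_fin_two, det_cfMatrix, abs_pow, abs_neg, abs_one, one_pow]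
  have hden : (cfMatrix D 1 0 * cfv X + cfMatrix D 1 1) * (cfMatrix D 1 0 * cfv Y + cfMatrix D 1 1)
      ≤ 4 * cfMatrix D 1 1 ^ 2 := by
    have hx1 := mul_le_mul_of_nonneg_left (cfv_le_one hX) hc
    have hy1 := mul_le_mul_of_nonneg_left (cfv_le_one hY) hc
    calc _ ≤ (2 * cfMatrix D 1 1) * (2 * cfMatrix D 1 1) := by gcongr <;> linarith
      _ = 4 * cfMatrix D 1 1 ^ 2 := by ring
  rw [cfv_append hD, cfv_append hD, mobius_sub_mobius hdx.ne' hdy.ne', abs_div, abs_mul, hdet,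
    one_mul, abs_of_pos (mul_pos hdx hdy), ← cfMatrix_one_one]
  exact div_le_div_of_nonneg_left (abs_nonneg _) (mul_pos hdx hdy) hden

lemma one_div_pow_three_le_abs_cfv_cons_sub {A t w : ℕ} {T W : List ℕ} (htw : t ≠ w)
    (ht : 1 ≤ t ∧ t ≤ A) (hw : 1 ≤ w ∧ w ≤ A)
    (hT : ∀ d ∈ T, 1 ≤ d ∧ d ≤ A) (hW : ∀ d ∈ W, 1 ≤ d ∧ d ≤ A) (hlen : T.length = W.length) :
    1 / ((A : ℝ) + 1) ^ 3 ≤ |cfv (t :: T) - cfv (w :: W)| := by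
  wlog hwt : w < t generalizing t w T W
  · rw [abs_sub_comm]
    exact this htw.symm hw ht hW hT hlen.symm (by omega)
  have hwt' : (w : ℝ) + 1 ≤ t := by exact_mod_cast hwt
  have hx := cfv_nonneg T
  have hy := cfv_nonneg W
  have hx1 := cfv_le_one fun d hd => (hT d hd).1
  have hy1 := cfv_le_one fun d hd => (hW d hd).1
  have htA : (t : ℝ) ≤ A := by exact_mod_cast ht.2
  have hw1 : (1 : ℝ) ≤ w := by exact_mod_cast hw.1
  have hw0 : 0 < (w : ℝ) + cfv W := by linarith
  have ht0 : 0 < (t : ℝ) + cfv T := by linarith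
  have hgap : 1 / ((A : ℝ) + 1) ≤ (t + cfv T) - (w + cfv W) := by
    cases T with
    | nil =>
      obtain rfl : W = [] := List.length_eq_zero_iff.mp hlen.symm
      rw [cfv, div_le_iff₀ (by positivity)]
      nlinarith
    | cons d T => linarith [one_div_add_one_le_cfv hT (List.cons_ne_nil d T)]
  have hdiff : 1 / (w + cfv W) - 1 / (t + cfv T) =
      ((t + cfv T) - (w + cfv W)) / ((w + cfv W) * (t + cfv T)) := by
    rw [div_sub_div _ _ hw0.ne' ht0.ne']
    ring
  rw [abs_sub_comm, cfv, cfv]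
  calc 1 / ((A : ℝ) + 1) ^ 3 = (1 / ((A : ℝ) + 1)) / (((A : ℝ) + 1) * ((A : ℝ) + 1)) := by
        rw [div_div]; ring
    _ ≤ ((t + cfv T) - (w + cfv W)) / ((w + cfv W) * (t + cfv T)) := by
      apply div_le_div₀ (by linarith) hgap (mul_pos hw0 ht0)
      gcongr
      exact hw.2
    _ ≤ _ := hdiff ▸ le_abs_self _

theorem lemma_5_1 (A : ℕ) (hA : 2 ≤ A) (D T W : List ℕ)
    (hD : ∀ d ∈ D, 1 ≤ d ∧ d ≤ A)
    (hT : ∀ d ∈ T, 1 ≤ d ∧ d ≤ A) (hW : ∀ d ∈ W, 1 ≤ d ∧ d ≤ A)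
    (hTne : T ≠ []) (hWne : W ≠ [])
    (hlen : T.length = W.length) (hhead : T.head hTne ≠ W.head hWne) :
    1 / ((2 * (A : ℝ)) ^ 4 * (cont D : ℝ) ^ 2) ≤ |cfv (D ++ T) - cfv (D ++ W)| := by
  have hcontract := abs_sub_div_le_abs_cfv_append_sub (fun d hd => (hD d hd).1)
    (fun d hd => (hT d hd).1) (fun d hd => (hW d hd).1)
  obtain ⟨t, T, rfl⟩ := List.exists_cons_of_ne_nil hTne
  obtain ⟨w, W, rfl⟩ := List.exists_cons_of_ne_nil hWne
  have hgap := one_div_pow_three_le_abs_cfv_cons_sub hhead (hT t (by simp)) (hW w (by simp))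
    (fun d hd => hT d (by simp [hd])) (fun d hd => hW d (by simp [hd]))
    (Nat.succ_injective hlen)
  have hA' : (2 : ℝ) ≤ A := by exact_mod_cast hA
  have hcont : (0 : ℝ) < cont D := by
    rw [← cfMatrix_one_one]
    linarith [(cfMatrix_bottom_row fun d hd => (hD d hd).1).2.2]
  calc 1 / ((2 * (A : ℝ)) ^ 4 * (cont D : ℝ) ^ 2)
      ≤ 1 / ((A : ℝ) + 1) ^ 3 / (4 * (cont D : ℝ) ^ 2) := by
        have hpoly : ((A : ℝ) + 1) ^ 3 * 4 ≤ (2 * (A : ℝ)) ^ 4 := by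
          nlinarith [sq_nonneg ((A : ℝ) - 2)]
        rw [div_div, div_le_div_iff_of_pos_left one_pos (by positivity) (by positivity)]
        linarith [mul_le_mul_of_nonneg_right hpoly (sq_nonneg (cont D : ℝ))]
    _ ≤ |cfv (t :: T) - cfv (w :: W)| / (4 * (cont D : ℝ) ^ 2) := by gcongr; exact hgap
    _ ≤ _ := hcontract
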